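/- arXiv:1208.1808 — 2 statements merged into one kernel-verified Lean document; each statement's English description precedes it below -/
import Mathlib

section
/- Let f : (0,∞) → ℂ be continuous. Assume: (a) for every N > 0 there exist finitely many coefficients a_1,…,a_m ∈ ℂ, exponents z_1,…,z_m ∈ ℂ, powers p_1,…,p_m ∈ ℕ and a constant C > 0 such that |f(t) − Σ_{i=1}^m a_i t^{z_i} (log t)^{p_i}| ≤ C t^N for all t ∈ (0,1]; and (b) for every N > 0 there exist finitely many b_1,…,b_l ∈ ℂ, w_1,…,w_l ∈ ℂ, q_1,…,q_l ∈ ℕ and C' > 0 such that |f(t) − Σ_{j=1}^l b_j t^{−w_j} (log t)^{q_j}| ≤ C' t^{−N} for all t ∈ [1,∞). Then there exist a real number A and functions Z_0, Z_∞ : ℂ → ℂ, each meromorphic on all of ℂ, such that Z_0(s) = ∫_0^1 f(t) t^{s−1} dt whenever Re s > A, and Z_∞(s) = ∫_1^∞ f(t) t^{s−1} dt whenever Re s < −A. -/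
/-!
Subtracting the expansion of `f` at `0` up to order `t ^ N` leaves a remainder whose Mellin
transform over `(0, 1]` is holomorphic on `-N < re s`, while each term `a t ^ z (log t) ^ p`
contributes the rational function `(-1) ^ p p! a / (s + z) ^ (p + 1)`, computed by integrating by
parts. For different `N` these continuations agree off a discrete set (identity principle), so they
glue to a meromorphic function on `ℂ`. The substitution `t ↦ t⁻¹` turns the integral over
`(1, ∞)` into one over `(0, 1]`, the expansion at `∞` into one at `0`, and `s` into `-s`.
-/

open MeasureTheory Set Filter Topology

theorem norm_ofReal_cpow_mul_log_pow {t : ℝ} (ht : 0 < t) (w : ℂ) (p : ℕ) :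
    ‖(t : ℂ) ^ w * (Real.log t : ℂ) ^ p‖ = t ^ w.re * |Real.log t| ^ p := by
  rw [norm_mul, norm_pow, Complex.norm_cpow_eq_rpow_re_of_pos ht, Complex.norm_real,
    Real.norm_eq_abs]

theorem exists_abs_log_pow_le_rpow_neg {ε : ℝ} (hε : 0 < ε) (p : ℕ) :
    ∃ c, ∀ t ∈ Ioc (0 : ℝ) 1, |Real.log t| ^ p ≤ c * t ^ (-ε) := by
  have hδ : 0 < ε / (p + 1) := by positivity
  refine ⟨((p + 1) / ε) ^ p, fun t ⟨ht0, ht1⟩ => ?_⟩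
  have hlog : |Real.log t| ≤ (p + 1) / ε * t ^ (-(ε / (p + 1))) := by
    have := Real.abs_log_mul_self_rpow_lt t _ ht0 ht1 hδ
    rw [abs_mul, abs_of_pos (Real.rpow_pos_of_pos ht0 _), one_div_div] at this
    rw [Real.rpow_neg ht0.le, ← div_eq_mul_inv, le_div_iff₀ (by positivity)]
    exact this.le
  calc |Real.log t| ^ p ≤ ((p + 1) / ε * t ^ (-(ε / (p + 1)))) ^ p := by gcongr
    _ = ((p + 1) / ε) ^ p * t ^ (-(ε * (p / (p + 1)))) := by
        rw [mul_pow, ← Real.rpow_natCast (t ^ _), ← Real.rpow_mul ht0.le]; ring_nf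
    _ ≤ ((p + 1) / ε) ^ p * t ^ (-ε) := by
        have : (p : ℝ) / (p + 1) ≤ 1 := by rw [div_le_one (by positivity)]; linarith
        exact mul_le_mul_of_nonneg_left
          (Real.rpow_le_rpow_of_exponent_ge ht0 ht1 (by nlinarith)) (by positivity)

theorem exists_norm_cpow_mul_log_pow_le (w : ℂ) {ε : ℝ} (hε : 0 < ε) (p : ℕ) :
    ∃ c, ∀ t ∈ Ioc (0 : ℝ) 1, ‖(t : ℂ) ^ w * (Real.log t : ℂ) ^ p‖ ≤ c * t ^ (w.re - ε) := by
  obtain ⟨c, hc⟩ := exists_abs_log_pow_le_rpow_neg hε p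
  refine ⟨c, fun t ht => ?_⟩
  rw [norm_ofReal_cpow_mul_log_pow ht.1, sub_eq_add_neg, Real.rpow_add ht.1]
  calc t ^ w.re * |Real.log t| ^ p ≤ t ^ w.re * (c * t ^ (-ε)) :=
        mul_le_mul_of_nonneg_left (hc t ht) (Real.rpow_nonneg ht.1.le _)
    _ = c * (t ^ w.re * t ^ (-ε)) := by ring

theorem continuousOn_cpow_mul_log_pow (w : ℂ) (p : ℕ) :
    ContinuousOn (fun t : ℝ => (t : ℂ) ^ w * (Real.log t : ℂ) ^ p) (Ioi 0) := fun t ht =>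
  ((Complex.continuousAt_ofReal_cpow_const t w (Or.inr (ne_of_gt ht))).mul
    ((Complex.continuous_ofReal.continuousAt.comp
      (Real.continuousAt_log (ne_of_gt ht))).pow p)).continuousWithinAt

theorem integrableOn_Ioc_of_norm_le_rpow {g : ℝ → ℂ} (hg : ContinuousOn g (Ioc 0 1)) {c N : ℝ}
    (hN : -1 < N) (hb : ∀ t ∈ Ioc (0 : ℝ) 1, ‖g t‖ ≤ c * t ^ N) : IntegrableOn g (Ioc 0 1) := by
  have hdom : IntegrableOn (fun t : ℝ => c * t ^ N) (Ioc 0 1) := by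
    rw [integrableOn_Ioc_iff_integrableOn_Ioo]
    exact ((intervalIntegral.integrableOn_Ioo_rpow_iff one_pos).2 hN).const_mul c
  exact hdom.integrable.mono' (hg.aestronglyMeasurable measurableSet_Ioc)
    ((ae_restrict_iff' measurableSet_Ioc).2 (ae_of_all _ hb))

theorem integrableOn_Ioc_cpow_mul_log_pow {w : ℂ} (hw : 0 < w.re) (p : ℕ) :
    IntegrableOn (fun t : ℝ => (t : ℂ) ^ (w - 1) * (Real.log t : ℂ) ^ p) (Ioc 0 1) := by
  obtain ⟨c, hc⟩ := exists_norm_cpow_mul_log_pow_le (w - 1) (half_pos hw) p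
  refine integrableOn_Ioc_of_norm_le_rpow
    ((continuousOn_cpow_mul_log_pow _ p).mono Ioc_subset_Ioi_self) ?_ hc
  simp only [Complex.sub_re, Complex.one_re]
  linarith

theorem tendsto_cpow_mul_log_pow_nhdsGT_zero {w : ℂ} (hw : 0 < w.re) (p : ℕ) :
    Tendsto (fun t : ℝ => (t : ℂ) ^ w * (Real.log t : ℂ) ^ p) (𝓝[>] 0) (𝓝 0) := by
  obtain ⟨c, hc⟩ := exists_norm_cpow_mul_log_pow_le w (half_pos hw) p
  have hpow : Tendsto (fun t : ℝ => c * t ^ (w.re - w.re / 2)) (𝓝[>] 0) (𝓝 0) := by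
    have hcont := Real.continuousAt_rpow_const 0 (w.re - w.re / 2) (Or.inr (by linarith))
    rw [ContinuousAt, Real.zero_rpow (by linarith)] at hcont
    simpa using (hcont.mono_left nhdsWithin_le_nhds).const_mul c
  refine squeeze_zero_norm' ?_ hpow
  filter_upwards [Ioo_mem_nhdsGT one_pos] with t ht using hc t (Ioo_subset_Ioc_self ht)

theorem hasDerivAt_cpow_mul_log_pow {w : ℂ} (hw : w ≠ 0) (p : ℕ) {t : ℝ} (ht : 0 < t) :
    HasDerivAt (fun u : ℝ => (u : ℂ) ^ w * (Real.log u : ℂ) ^ p)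
      ((t : ℂ) ^ (w - 1) * (w * (Real.log t : ℂ) ^ p + p * (Real.log t : ℂ) ^ (p - 1))) t := by
  have hlog : HasDerivAt (fun u : ℝ => (Real.log u : ℂ)) ((t : ℂ)⁻¹) t := by
    simpa using (Real.hasDerivAt_log ht.ne').ofReal_comp
  refine ((hasDerivAt_ofReal_cpow_const ht.ne' hw).mul (hlog.pow p)).congr_deriv ?_
  rw [Complex.cpow_sub _ _ (by exact_mod_cast ht.ne'), Complex.cpow_one, Pi.pow_apply]
  field_simp

theorem integral_Ioc_cpow_mul_log_pow_recurrence {w : ℂ} (hw : 0 < w.re) (p : ℕ) :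
    w * (∫ t in Ioc (0 : ℝ) 1, (t : ℂ) ^ (w - 1) * (Real.log t : ℂ) ^ p)
      + p * ∫ t in Ioc (0 : ℝ) 1, (t : ℂ) ^ (w - 1) * (Real.log t : ℂ) ^ (p - 1)
      = if p = 0 then 1 else 0 := by
  have hw0 : w ≠ 0 := fun h => by simp [h] at hw
  have hcont : ContinuousAt (fun t : ℝ => (t : ℂ) ^ w * (Real.log t : ℂ) ^ p) 1 :=
    (continuousOn_cpow_mul_log_pow w p).continuousAt (Ioi_mem_nhds one_pos)
  rw [← integral_const_mul, ← integral_const_mul,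
    ← integral_add ((integrableOn_Ioc_cpow_mul_log_pow hw p).const_mul w)
      ((integrableOn_Ioc_cpow_mul_log_pow hw (p - 1)).const_mul p),
    ← intervalIntegral.integral_of_le zero_le_one]
  calc ∫ t in (0 : ℝ)..1, (w * ((t : ℂ) ^ (w - 1) * (Real.log t : ℂ) ^ p)
        + p * ((t : ℂ) ^ (w - 1) * (Real.log t : ℂ) ^ (p - 1)))
      = (1 : ℂ) ^ w * (Real.log 1 : ℂ) ^ p - 0 := by
        refine intervalIntegral.integral_eq_sub_of_hasDerivAt_of_tendsto zero_lt_one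
          (fun t ht => (hasDerivAt_cpow_mul_log_pow hw0 p ht.1).congr_deriv (by ring)) ?_
          (tendsto_cpow_mul_log_pow_nhdsGT_zero hw p) ?_
        · exact (intervalIntegrable_iff_integrableOn_Ioc_of_le zero_le_one).2
            (((integrableOn_Ioc_cpow_mul_log_pow hw p).const_mul w).add
              ((integrableOn_Ioc_cpow_mul_log_pow hw (p - 1)).const_mul p))
        · simpa using hcont.tendsto.mono_left nhdsWithin_le_nhds
    _ = if p = 0 then 1 else 0 := by cases p <;> simp

theorem integral_Ioc_cpow_mul_log_pow {w : ℂ} (hw : 0 < w.re) (p : ℕ) :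
    ∫ t in Ioc (0 : ℝ) 1, (t : ℂ) ^ (w - 1) * (Real.log t : ℂ) ^ p
      = (-1) ^ p * p.factorial / w ^ (p + 1) := by
  have hw0 : w ≠ 0 := fun h => by simp [h] at hw
  induction p with
  | zero =>
    have h := integral_Ioc_cpow_mul_log_pow_recurrence hw 0
    simp only [Nat.cast_zero, zero_mul, add_zero] at h
    rw [eq_div_iff (by simpa using hw0)]
    simpa [mul_comm] using h
  | succ p ih =>
    have h := integral_Ioc_cpow_mul_log_pow_recurrence hw (p + 1)
    rw [Nat.add_sub_cancel, ih, if_neg p.succ_ne_zero] at h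
    rw [eq_div_iff (pow_ne_zero _ hw0)]
    field_simp at h
    push_cast [Nat.factorial_succ] at h ⊢
    linear_combination h

theorem mellin_indicator_eq_setIntegral {S : Set ℝ} (hS : MeasurableSet S) (hS0 : S ⊆ Ioi 0)
    (g : ℝ → ℂ) (s : ℂ) : mellin (S.indicator g) s = ∫ t in S, (t : ℂ) ^ (s - 1) * g t := by
  rw [mellin, ← indicator_smul, setIntegral_indicator hS, inter_eq_right.2 hS0]
  rfl

theorem differentiableOn_mellin_indicator_Ioc {h : ℝ → ℂ} (hint : IntegrableOn h (Ioc 0 1))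
    {C N : ℝ} (hb : ∀ t ∈ Ioc (0 : ℝ) 1, ‖h t‖ ≤ C * t ^ N) :
    DifferentiableOn ℂ (mellin ((Ioc 0 1).indicator h)) {s | -N < s.re} := by
  intro s hs
  refine (mellin_differentiableAt_of_isBigO_rpow (a := s.re + 1) (b := -N)
    ((hint.integrable_indicator measurableSet_Ioc).locallyIntegrable.locallyIntegrableOn _)
    ?_ (lt_add_one _) ?_ hs).differentiableWithinAt
  · refine (Asymptotics.isBigO_zero _ _).congr' ?_ EventuallyEq.rfl
    filter_upwards [eventually_gt_atTop 1] with t ht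
    exact (indicator_of_notMem (fun h => not_le.2 ht h.2) _).symm
  · refine Asymptotics.IsBigO.of_bound C ?_
    filter_upwards [Ioo_mem_nhdsGT one_pos] with t ht
    rw [indicator_of_mem (Ioo_subset_Ioc_self ht), neg_neg,
      Real.norm_of_nonneg (Real.rpow_nonneg ht.1.le _)]
    exact hb t (Ioo_subset_Ioc_self ht)

theorem MeromorphicOn.eventuallyEq_nhdsNE_of_eventuallyEq {𝕜 E : Type*}
    [NontriviallyNormedField 𝕜] [NormedAddCommGroup E] [NormedSpace 𝕜 E] {f g : 𝕜 → E}
    {U : Set 𝕜} (hU : IsPreconnected U) (hf : MeromorphicOn f U) (hg : MeromorphicOn g U)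
    {v : 𝕜} (hv : v ∈ U) (hfg : f =ᶠ[𝓝 v] g) {x : 𝕜} (hx : x ∈ U) : f =ᶠ[𝓝[≠] x] g := by
  have htop : meromorphicOrderAt (f - g) x = ⊤ := by
    by_contra hne
    refine meromorphicOrderAt_ne_top_of_isPreconnected (hf.sub hg) hU hx hv hne
      (meromorphicOrderAt_eq_top_iff.2 ?_)
    filter_upwards [nhdsWithin_le_nhds hfg] with z hz
    simp [hz]
  filter_upwards [meromorphicOrderAt_eq_top_iff.1 htop] with z hz
  exact sub_eq_zero.1 hz

theorem eventuallyEq_nhdsNE_of_meromorphicOn_re_gt {F G₁ G₂ : ℂ → ℂ} {a₁ a₂ A₁ A₂ : ℝ}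
    (hG₁ : MeromorphicOn G₁ {s | a₁ < s.re}) (hG₂ : MeromorphicOn G₂ {s | a₂ < s.re})
    (hF₁ : ∀ s : ℂ, A₁ < s.re → G₁ s = F s) (hF₂ : ∀ s : ℂ, A₂ < s.re → G₂ s = F s)
    {x : ℂ} (hx₁ : a₁ < x.re) (hx₂ : a₂ < x.re) : G₁ =ᶠ[𝓝[≠] x] G₂ := by
  set b := max (max a₁ a₂) (max A₁ A₂)
  have hb : G₁ =ᶠ[𝓝 ((b + 1 : ℝ) : ℂ)] G₂ := by
    have hopen : IsOpen {s : ℂ | b < s.re} := isOpen_lt continuous_const Complex.continuous_re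
    filter_upwards [hopen.mem_nhds (by simp)] with s hs
    rw [hF₁ s (by grind), hF₂ s (by grind)]
  exact MeromorphicOn.eventuallyEq_nhdsNE_of_eventuallyEq
    ((convex_halfSpace_re_gt _).inter (convex_halfSpace_re_gt _)).isPreconnected
    (hG₁.mono_set inter_subset_left) (hG₂.mono_set inter_subset_right)
    (by simp only [mem_inter_iff, mem_ofPred_eq, Complex.ofReal_re]; grind) hb ⟨hx₁, hx₂⟩

theorem exists_meromorphicOn_univ_of_forall_halfPlane {F : ℂ → ℂ}
    (h : ∀ n : ℕ, ∃ (G : ℂ → ℂ) (A : ℝ),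
      MeromorphicOn G {s | -(n : ℝ) < s.re} ∧ ∀ s : ℂ, A < s.re → G s = F s) :
    ∃ (Z : ℂ → ℂ) (A : ℝ), MeromorphicOn Z univ ∧ ∀ s : ℂ, A < s.re → Z s = F s := by
  choose G A hG hGF using h
  -- `s` lies in the `ν s`-th half-plane, and near `x` only the indices `≤ ν x + 1` occur
  set ν : ℂ → ℕ := fun s => ⌈-s.re⌉₊ + 1
  have hν : ∀ s : ℂ, -(ν s : ℝ) < s.re := fun s => by
    have := Nat.le_ceil (-s.re); push_cast [ν]; linarith
  refine ⟨fun s => G (ν s) s, max (A 1) 0, fun x _ => ?_, fun s hs => ?_⟩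
  · have hfin : ∀ᶠ s in 𝓝[≠] x, ∀ j ∈ Finset.range (ν x + 2), -(j : ℝ) < x.re →
        G j s = G (ν x) s := by
      refine (eventually_all_finset _).2 fun j _ => ?_
      by_cases hj : -(j : ℝ) < x.re
      · filter_upwards [eventuallyEq_nhdsNE_of_meromorphicOn_re_gt (hG j) (hG (ν x))
          (hGF j) (hGF (ν x)) hj (hν x)] with s hs using fun _ => hs
      · exact .of_forall fun _ h => absurd h hj
    have hnear : ∀ᶠ s in 𝓝[≠] x, s.re ∈ Metric.ball x.re (1 / 2) := nhdsWithin_le_nhds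
      ((Complex.continuous_re.tendsto x).eventually (Metric.ball_mem_nhds _ one_half_pos))
    refine ((hG (ν x)) x (hν x)).congr ?_
    filter_upwards [hfin, hnear] with s hs hsx
    rw [Metric.mem_ball, Real.dist_eq] at hsx
    have hle : ⌈-s.re⌉₊ ≤ ⌈-x.re⌉₊ + 1 := by
      have := Nat.le_ceil (-x.re)
      exact Nat.ceil_le.2 (by push_cast; linarith [(abs_lt.1 hsx).1])
    refine (hs (ν s) (Finset.mem_range.2 (by simp only [ν]; omega)) ?_).symm
    have := Nat.le_ceil (-s.re)
    push_cast [ν]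
    linarith [(abs_lt.1 hsx).2]
  · have hν1 : ν s = 1 := by
      simp only [ν, Nat.ceil_eq_zero.2 (by linarith [le_max_right (A 1) 0] : -s.re ≤ 0)]
    simp only [hν1]
    exact hGF 1 s (lt_of_le_of_lt (le_max_left _ _) hs)

section Expansion

variable {m : ℕ} (a z : Fin m → ℂ) (p : Fin m → ℕ)

theorem integral_Ioc_sum_add_mul_cpow {h : ℝ → ℂ} (hh : ContinuousOn h (Ioc 0 1)) {C N : ℝ}
    (hb : ∀ t ∈ Ioc (0 : ℝ) 1, ‖h t‖ ≤ C * t ^ N) {s : ℂ} (hsN : -N < s.re)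
    (hsz : ∀ i, 0 < (s + z i).re) :
    ∫ t in Ioc (0 : ℝ) 1,
        (∑ i, a i * (t : ℂ) ^ (z i) * (Real.log t : ℂ) ^ (p i) + h t) * (t : ℂ) ^ (s - 1)
      = ∑ i, a i * ((-1) ^ p i * (p i).factorial / (s + z i) ^ (p i + 1))
        + mellin ((Ioc 0 1).indicator h) s := by
  have hterm : ∀ i, IntegrableOn
      (fun t : ℝ => a i * ((t : ℂ) ^ (s + z i - 1) * (Real.log t : ℂ) ^ (p i))) (Ioc 0 1) :=
    fun i => (integrableOn_Ioc_cpow_mul_log_pow (hsz i) (p i)).const_mul (a i)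
  have hrem : IntegrableOn (fun t : ℝ => (t : ℂ) ^ (s - 1) * h t) (Ioc 0 1) := by
    refine integrableOn_Ioc_of_norm_le_rpow (c := C) (N := s.re - 1 + N)
      (((continuousOn_cpow_mul_log_pow (s - 1) 0).mono Ioc_subset_Ioi_self).mul hh |>.congr
        fun t _ => by simp) (by linarith) fun t ht => ?_
    rw [norm_mul, Complex.norm_cpow_eq_rpow_re_of_pos ht.1, Complex.sub_re, Complex.one_re,
      Real.rpow_add ht.1]
    calc t ^ (s.re - 1) * ‖h t‖ ≤ t ^ (s.re - 1) * (C * t ^ N) :=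
          mul_le_mul_of_nonneg_left (hb t ht) (Real.rpow_nonneg ht.1.le _)
      _ = C * (t ^ (s.re - 1) * t ^ N) := by ring
  have hsplit : ∀ t ∈ Ioc (0 : ℝ) 1,
      (∑ i, a i * (t : ℂ) ^ (z i) * (Real.log t : ℂ) ^ (p i) + h t) * (t : ℂ) ^ (s - 1)
        = ∑ i, a i * ((t : ℂ) ^ (s + z i - 1) * (Real.log t : ℂ) ^ (p i))
          + (t : ℂ) ^ (s - 1) * h t := fun t ht => by
    have hcpow : ∀ i, (t : ℂ) ^ (s + z i - 1) = (t : ℂ) ^ (z i) * (t : ℂ) ^ (s - 1) := fun i => by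
      rw [← Complex.cpow_add _ _ (Complex.ofReal_ne_zero.2 ht.1.ne')]
      ring_nf
    simp only [hcpow, add_mul, Finset.sum_mul, mul_comm (h t)]
    congr 1
    exact Finset.sum_congr rfl fun i _ => by ring
  rw [setIntegral_congr_fun measurableSet_Ioc hsplit,
    integral_add (integrable_finsetSum _ fun i _ => hterm i) hrem,
    integral_finsetSum _ fun i _ => hterm i,
    mellin_indicator_eq_setIntegral measurableSet_Ioc Ioc_subset_Ioi_self]
  simp only [integral_const_mul, integral_Ioc_cpow_mul_log_pow (hsz _)]

theorem exists_meromorphicOn_re_gt_eq_integral_Ioc {f : ℝ → ℂ} (hf : ContinuousOn f (Ioi 0))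
    {C N : ℝ} (hN : 0 < N)
    (hb : ∀ t ∈ Ioc (0 : ℝ) 1,
      ‖f t - ∑ i, a i * (t : ℂ) ^ (z i) * (Real.log t : ℂ) ^ (p i)‖ ≤ C * t ^ N) :
    ∃ (G : ℂ → ℂ) (A : ℝ), MeromorphicOn G {s | -N < s.re} ∧
      ∀ s : ℂ, A < s.re → G s = ∫ t in Ioc (0 : ℝ) 1, f t * (t : ℂ) ^ (s - 1) := by
  set h : ℝ → ℂ := fun t => f t - ∑ i, a i * (t : ℂ) ^ (z i) * (Real.log t : ℂ) ^ (p i)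
  have hh : ContinuousOn h (Ioi 0) := hf.sub <| continuousOn_finsetSum _ fun i _ =>
    (continuousOn_const.mul (continuousOn_cpow_mul_log_pow (z i) (p i))).congr fun t _ =>
      mul_assoc _ _ _
  refine ⟨fun s => ∑ i, a i * ((-1) ^ p i * (p i).factorial / (s + z i) ^ (p i + 1))
    + mellin ((Ioc 0 1).indicator h) s, ∑ i, |(z i).re|, ?_, fun s hs => ?_⟩
  · refine MeromorphicOn.add (fun s _ => by fun_prop) (AnalyticOnNhd.meromorphicOn ?_)
    exact (differentiableOn_mellin_indicator_Ioc (integrableOn_Ioc_of_norm_le_rpow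
      (hh.mono Ioc_subset_Ioi_self) (by linarith) hb) hb).analyticOnNhd
      (isOpen_lt continuous_const Complex.continuous_re)
  · have hsz : ∀ i, 0 < (s + z i).re := fun i => by
      have := Finset.single_le_sum (fun j _ => abs_nonneg (z j).re) (Finset.mem_univ i)
      rw [Complex.add_re]
      linarith [neg_abs_le (z i).re]
    have hs0 : 0 ≤ ∑ i, |(z i).re| := Finset.sum_nonneg fun i _ => abs_nonneg _
    simpa only [h, add_sub_cancel] using (integral_Ioc_sum_add_mul_cpow a z p
      (hh.mono Ioc_subset_Ioi_self) hb (by linarith) hsz).symm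

end Expansion

def HasPolyhomogeneousExpansionAtZero (f : ℝ → ℂ) : Prop :=
  ∀ N : ℝ, 0 < N → ∃ (m : ℕ) (a : Fin m → ℂ) (z : Fin m → ℂ) (p : Fin m → ℕ) (C : ℝ), 0 < C ∧
    ∀ t ∈ Ioc (0 : ℝ) 1,
      ‖f t - ∑ i, a i * (t : ℂ) ^ (z i) * ((Real.log t : ℂ)) ^ (p i)‖ ≤ C * t ^ N

def HasPolyhomogeneousExpansionAtTop (f : ℝ → ℂ) : Prop :=
  ∀ N : ℝ, 0 < N → ∃ (l : ℕ) (b : Fin l → ℂ) (w : Fin l → ℂ) (q : Fin l → ℕ) (C' : ℝ), 0 < C' ∧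
    ∀ t ∈ Ici (1 : ℝ),
      ‖f t - ∑ j, b j * (t : ℂ) ^ (-(w j)) * ((Real.log t : ℂ)) ^ (q j)‖ ≤ C' * t ^ (-N)

theorem HasPolyhomogeneousExpansionAtZero.exists_meromorphic_continuation {f : ℝ → ℂ}
    (hf : ContinuousOn f (Ioi 0)) (hexp : HasPolyhomogeneousExpansionAtZero f) :
    ∃ (Z : ℂ → ℂ) (A : ℝ), MeromorphicOn Z univ ∧
      ∀ s : ℂ, A < s.re → Z s = ∫ t in Ioc (0 : ℝ) 1, f t * (t : ℂ) ^ (s - 1) :=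
  exists_meromorphicOn_univ_of_forall_halfPlane fun n => by
    obtain ⟨m, a, z, p, C, -, hb⟩ := hexp (n + 1) (by positivity)
    obtain ⟨G, A, hG, hGF⟩ :=
      exists_meromorphicOn_re_gt_eq_integral_Ioc a z p hf (by positivity) hb
    refine ⟨G, A, hG.mono_set fun s (hs : -(n : ℝ) < s.re) => ?_, hGF⟩
    simp only [mem_ofPred_eq]
    linarith

theorem HasPolyhomogeneousExpansionAtTop.comp_inv {f : ℝ → ℂ}
    (hexp : HasPolyhomogeneousExpansionAtTop f) :
    HasPolyhomogeneousExpansionAtZero fun t => f t⁻¹ := by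
  intro N hN
  obtain ⟨l, b, w, q, C, hC, hb⟩ := hexp N hN
  refine ⟨l, fun j => (-1) ^ q j * b j, w, q, C, hC, fun t ht => ?_⟩
  have hterm : ∀ j, ((t⁻¹ : ℝ) : ℂ) ^ (-w j) = (t : ℂ) ^ (w j) := fun j => by
    rw [Complex.ofReal_inv, Complex.inv_cpow _ _ (by simp [Complex.arg_ofReal_of_nonneg ht.1.le,
      Real.pi_ne_zero.symm]), ← Complex.cpow_neg, neg_neg]
  have h := hb t⁻¹ ((one_le_inv₀ ht.1).2 ht.2)
  simp only [hterm, Real.log_inv, Complex.ofReal_neg, neg_pow (Real.log t : ℂ),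
    Real.inv_rpow ht.1.le, Real.rpow_neg ht.1.le, inv_inv] at h
  convert h using 4 with j
  ring

theorem integral_Ioi_one_mul_cpow (F : ℝ → ℂ) (s : ℂ) :
    ∫ t in Ioi (1 : ℝ), F t * (t : ℂ) ^ (s - 1)
      = ∫ t in Ioc (0 : ℝ) 1, F t⁻¹ * (t : ℂ) ^ (-s - 1) := by
  have hinv : EqOn (fun t => (Ioi 1).indicator F t⁻¹) ((Ioo 0 1).indicator fun t => F t⁻¹)
      (Ioi 0) := fun t (ht : 0 < t) => by
    show (Ioi 1).indicator F t⁻¹ = _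
    by_cases ht1 : t < 1
    · rw [indicator_of_mem (s := Ioi 1) ((one_lt_inv₀ ht).2 ht1),
        indicator_of_mem (s := Ioo 0 1) ⟨ht, ht1⟩]
    · rw [indicator_of_notMem (s := Ioi 1) (fun h => ht1 ((one_lt_inv₀ ht).1 h)),
        indicator_of_notMem (s := Ioo 0 1) fun h => ht1 h.2]
  have hmellin : mellin (fun t => (Ioi 1).indicator F t⁻¹) (-s)
      = mellin ((Ioo 0 1).indicator fun t => F t⁻¹) (-s) :=
    setIntegral_congr_fun measurableSet_Ioi fun t ht => congrArg _ (hinv ht)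
  simp only [mul_comm (F _)]
  rw [← mellin_indicator_eq_setIntegral measurableSet_Ioi (Ioi_subset_Ioi zero_le_one),
    ← neg_neg s, ← mellin_comp_inv, hmellin,
    mellin_indicator_eq_setIntegral measurableSet_Ioo Ioo_subset_Ioi_self,
    integral_Ioc_eq_integral_Ioo, neg_neg]

/-- If `f : (0,∞) → ℂ` is continuous and admits polyhomogeneous asymptotic expansions
(in powers `t^z (log t)^p`) at `t = 0` and (in powers `t^(-w) (log t)^q`) at `t = ∞`,
then there are `A ∈ ℝ` and functions `Z₀, Zinf` meromorphic on all of `ℂ` with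
`Z₀ s = ∫_0^1 f(t) t^(s-1) dt` for `Re s > A` and `Zinf s = ∫_1^∞ f(t) t^(s-1) dt`
for `Re s < -A`. -/
theorem renormalized_zeta_meromorphic_continuation (f : ℝ → ℂ)
    (hf : ContinuousOn f (Ioi 0))
    (hzero : ∀ N : ℝ, 0 < N → ∃ (m : ℕ) (a : Fin m → ℂ) (z : Fin m → ℂ)
      (p : Fin m → ℕ) (C : ℝ), 0 < C ∧ ∀ t ∈ Ioc (0 : ℝ) 1,
        ‖f t - ∑ i, a i * (t : ℂ) ^ (z i) * ((Real.log t : ℂ)) ^ (p i)‖ ≤ C * t ^ N)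
    (hinf : ∀ N : ℝ, 0 < N → ∃ (l : ℕ) (b : Fin l → ℂ) (w : Fin l → ℂ)
      (q : Fin l → ℕ) (C' : ℝ), 0 < C' ∧ ∀ t ∈ Ici (1 : ℝ),
        ‖f t - ∑ j, b j * (t : ℂ) ^ (-(w j)) * ((Real.log t : ℂ)) ^ (q j)‖ ≤ C' * t ^ (-N)) :
    ∃ (A : ℝ) (Z₀ Zinf : ℂ → ℂ),
      MeromorphicOn Z₀ (Set.univ : Set ℂ) ∧
      MeromorphicOn Zinf (Set.univ : Set ℂ) ∧
      (∀ s : ℂ, A < s.re →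
        Z₀ s = ∫ t in Ioc (0 : ℝ) 1, f t * (t : ℂ) ^ (s - 1)) ∧
      (∀ s : ℂ, s.re < -A →
        Zinf s = ∫ t in Ioi (1 : ℝ), f t * (t : ℂ) ^ (s - 1)) := by
  obtain ⟨Z₀, A₀, hZ₀, hZ₀eq⟩ :=
    HasPolyhomogeneousExpansionAtZero.exists_meromorphic_continuation hf hzero
  have hf_inv : ContinuousOn (fun t => f t⁻¹) (Ioi 0) :=
    hf.comp (continuousOn_inv₀.mono fun _ ht => ne_of_gt ht) fun _ ht => inv_pos.2 (mem_Ioi.1 ht)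
  obtain ⟨Z₁, A₁, hZ₁, hZ₁eq⟩ :=
    HasPolyhomogeneousExpansionAtZero.exists_meromorphic_continuation hf_inv
      (HasPolyhomogeneousExpansionAtTop.comp_inv hinf)
  refine ⟨max A₀ A₁, Z₀, fun s => Z₁ (-s), hZ₀,
    fun x _ => (hZ₁ (-x) trivial).comp_analyticAt analyticAt_id.neg,
    fun s hs => hZ₀eq s (lt_of_le_of_lt (le_max_left _ _) hs), fun s hs => ?_⟩
  rw [integral_Ioi_one_mul_cpow, ← hZ₁eq (-s)]
  rw [Complex.neg_re]
  linarith [le_max_right A₀ A₁]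
end

section
/- Let n ≥ 1 be an integer, let f_0,…,f_{n−1}, f_log, P ∈ ℝ, and let F : (0,1) → ℝ be of the form F(δ) = Σ_{k=0}^{n−1} f_k δ^{k−n} + f_log · log δ + P + R(δ), where R is continuous and R(δ) → 0 as δ → 0^+. Let χ : (0,∞) → ℝ be continuously differentiable, non-increasing, with χ ≡ 1 on (0,1/2] and χ ≡ 0 on [2,∞). Define G(δ) = −∫_{1/2}^{2} χ'(u) F(δ/u) du for δ ∈ (0,1/4). Then G(δ) = Σ_{k=0}^{n−1} l_k f_k δ^{k−n} + f_log · log δ + (P + c_χ f_log) + R̃(δ), where l_k = −∫_{1/2}^{2} χ'(u) u^{n−k} du, c_χ = ∫_{1/2}^{2} χ'(u) log u du, and R̃(δ) → 0 as δ → 0^+. -/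
open MeasureTheory Set Filter
open scoped Topology Interval

/-!
Substituting the expansion of `F (δ / u)` into the integral, the terms separate as
`(δ / u) ^ (k - n) = δ ^ (k - n) * u ^ (n - k)` and `log (δ / u) = log δ - log u`, while
`∫ χ' = χ 2 - χ (1 / 2) = -1` gives back the `log δ` and constant terms unchanged, and the
`-log u` part produces `c_χ f_log`. What is left is `-∫ χ'(u) R (δ / u) du`, which tends to `0` because `δ / u → 0⁺` uniformly for
`u ∈ [1/2, 2]`.
-/

theorem tendstoUniformlyOn_comp_div_nhdsGT {E : Type*} [PseudoMetricSpace E] {R : ℝ → E} {y : E}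
    {a : ℝ} (ha : 0 < a) (hR : Tendsto R (𝓝[>] 0) (𝓝 y)) :
    TendstoUniformlyOn (fun δ u => R (δ / u)) (fun _ => y) (𝓝[>] 0) (Ici a) := by
  rw [Metric.tendstoUniformlyOn_iff]
  intro ε hε
  obtain ⟨d, hd, hRd⟩ := Metric.tendsto_nhdsWithin_nhds.1 hR ε hε
  filter_upwards [Ioo_mem_nhdsGT (mul_pos ha hd)] with δ hδ u hu
  have hu0 : 0 < u := ha.trans_le hu
  rw [dist_comm]
  refine hRd (div_pos hδ.1 hu0) ?_
  rw [Real.dist_0_eq_abs, abs_of_pos (div_pos hδ.1 hu0), div_lt_iff₀ hu0]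
  nlinarith [hδ.2, mem_Ici.1 hu]

theorem tendsto_intervalIntegral_mul_of_tendstoUniformlyOn {ι : Type*} {l : Filter ι}
    {g : ℝ → ℝ} {F : ι → ℝ → ℝ} {a b : ℝ} (hab : a ≤ b) (hg : ContinuousOn g (Icc a b))
    (hF : TendstoUniformlyOn F 0 l (Icc a b)) :
    Tendsto (fun i => ∫ u in a..b, g u * F i u) l (𝓝 0) := by
  obtain ⟨M, hM⟩ := isCompact_Icc.exists_bound_of_continuousOn hg
  rw [Metric.tendsto_nhds]
  intro ε hε
  set η := ε / ((|M| + 1) * (b - a + 1))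
  have hba : 0 < b - a + 1 := by linarith
  have hη : 0 < η := by positivity
  filter_upwards [Metric.tendstoUniformlyOn_iff.1 hF η hη] with i hi
  have hbound : ∀ u ∈ Ι a b, ‖g u * F i u‖ ≤ (|M| + 1) * η := by
    intro u hu
    rw [uIoc_of_le hab] at hu
    have hFu := hi u (Ioc_subset_Icc_self hu)
    rw [Pi.zero_apply, dist_zero_left] at hFu
    rw [norm_mul]
    gcongr
    exact (hM u (Ioc_subset_Icc_self hu)).trans ((le_abs_self M).trans (by linarith))
  calc dist (∫ u in a..b, g u * F i u) 0 ≤ (|M| + 1) * η * |b - a| := by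
        rw [dist_zero_right]; exact intervalIntegral.norm_integral_le_of_norm_le_const hbound
    _ < (|M| + 1) * η * (b - a + 1) := by
        rw [abs_of_nonneg (sub_nonneg.2 hab)]; gcongr; linarith
    _ = ε := by
        simp only [η]; field_simp [hba.ne']

theorem Real.div_rpow_natCast_sub {x y : ℝ} {k n : ℕ} (hx : 0 ≤ x) (hy : 0 ≤ y) (hkn : k ≤ n) :
    (x / y) ^ ((k : ℝ) - n) = x ^ ((k : ℝ) - n) * y ^ (n - k) := by
  rw [Real.div_rpow hx hy, div_eq_mul_inv, ← Real.rpow_neg hy, neg_sub, ← Real.rpow_natCast,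
    Nat.cast_sub hkn]

theorem intervalIntegral_mul_expansion_comp_div {n : ℕ} {f : ℕ → ℝ} {flog P δ a b : ℝ}
    {F R g : ℝ → ℝ} (hδ : 0 < δ) (ha : 0 < a) (hab : a ≤ b) (hg : ContinuousOn g (Icc a b))
    (hRg : IntervalIntegrable (fun u => g u * R (δ / u)) volume a b)
    (hF : ∀ u ∈ Icc a b, F (δ / u) = ∑ k ∈ Finset.range n, f k * (δ / u) ^ ((k : ℝ) - n)
      + flog * Real.log (δ / u) + P + R (δ / u)) :
    ∫ u in a..b, g u * F (δ / u) =
      ∑ k ∈ Finset.range n, (∫ u in a..b, g u * u ^ (n - k)) * f k * δ ^ ((k : ℝ) - n)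
        + (flog * Real.log δ + P) * (∫ u in a..b, g u)
        - flog * (∫ u in a..b, g u * Real.log u) + ∫ u in a..b, g u * R (δ / u) := by
  have hpos : ∀ u ∈ Icc a b, 0 < u := fun u hu => ha.trans_le hu.1
  have hlog : ContinuousOn Real.log (Icc a b) :=
    Real.continuousOn_log.mono fun u hu => (hpos u hu).ne'
  have hpoint : EqOn (fun u => g u * F (δ / u))
      (fun u => ∑ k ∈ Finset.range n, f k * δ ^ ((k : ℝ) - n) * (g u * u ^ (n - k))
        + (flog * Real.log δ + P) * g u - flog * (g u * Real.log u) + g u * R (δ / u))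
      [[a, b]] := by
    intro u hu
    rw [uIcc_of_le hab] at hu
    have hu0 := hpos u hu
    have hsum : g u * ∑ k ∈ Finset.range n, f k * (δ / u) ^ ((k : ℝ) - n)
        = ∑ k ∈ Finset.range n, f k * δ ^ ((k : ℝ) - n) * (g u * u ^ (n - k)) := by
      rw [Finset.mul_sum]
      refine Finset.sum_congr rfl fun k hk => ?_
      rw [Real.div_rpow_natCast_sub hδ.le hu0.le (Finset.mem_range.1 hk).le]
      ring
    dsimp only
    rw [hF u hu, Real.log_div hδ.ne' hu0.ne', mul_add, mul_add, mul_add, hsum]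
    ring
  rw [intervalIntegral.integral_congr hpoint, intervalIntegral.integral_add,
    intervalIntegral.integral_sub, intervalIntegral.integral_add,
    intervalIntegral.integral_finsetSum]
  · simp only [intervalIntegral.integral_const_mul]
    congr 3
    exact Finset.sum_congr rfl fun _ _ => by ring
  all_goals first
    | exact hRg
    | intros; apply ContinuousOn.intervalIntegrable_of_Icc hab; fun_prop

theorem smooth_vs_sharp_cutoff_general (n : ℕ) (f : ℕ → ℝ) (flog P : ℝ)
    (F R : ℝ → ℝ) (hRcont : ContinuousOn R (Ioo 0 1))
    (hR : Filter.Tendsto R (nhdsWithin 0 (Ioi 0)) (nhds 0))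
    (hF : ∀ δ ∈ Ioo (0 : ℝ) 1,
      F δ = ∑ k ∈ Finset.range n, f k * δ ^ ((k : ℝ) - n) + flog * Real.log δ + P + R δ)
    (χ : ℝ → ℝ) (hχ : ContDiffOn ℝ 1 χ (Ioi 0))
    (hχ1 : ∀ u ∈ Ioc (0 : ℝ) (1 / 2), χ u = 1) (hχ0 : ∀ u ∈ Ici (2 : ℝ), χ u = 0)
    (G : ℝ → ℝ)
    (hG : ∀ δ ∈ Ioo (0 : ℝ) (1 / 4), G δ = -∫ u in (1 / 2 : ℝ)..2, deriv χ u * F (δ / u)) :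
    ∃ Rt : ℝ → ℝ,
      (∀ δ ∈ Ioo (0 : ℝ) (1 / 4),
        G δ = ∑ k ∈ Finset.range n,
            (-∫ u in (1 / 2 : ℝ)..2, deriv χ u * u ^ (n - k)) * f k * δ ^ ((k : ℝ) - n)
          + flog * Real.log δ
          + (P + (∫ u in (1 / 2 : ℝ)..2, deriv χ u * Real.log u) * flog)
          + Rt δ) ∧
      Filter.Tendsto Rt (nhdsWithin 0 (Ioi 0)) (nhds 0) := by
  have hIcc : Icc (1 / 2 : ℝ) 2 ⊆ Ioi 0 := fun u hu => lt_of_lt_of_le (by norm_num) hu.1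
  have hχ' : ContinuousOn (deriv χ) (Icc (1 / 2) 2) :=
    (hχ.continuousOn_deriv_of_isOpen isOpen_Ioi le_rfl).mono hIcc
  have hχ'_integral : ∫ u in (1 / 2 : ℝ)..2, deriv χ u = -1 := by
    rw [intervalIntegral.integral_deriv_eq_sub
      (fun u hu => (hχ.differentiableOn one_ne_zero).differentiableAt <| isOpen_Ioi.mem_nhds <|
        hIcc <| uIcc_of_le (by norm_num : (1 / 2 : ℝ) ≤ 2) ▸ hu)
      (hχ'.intervalIntegrable_of_Icc (by norm_num)),
      hχ0 2 self_mem_Ici, hχ1 (1 / 2) ⟨by norm_num, le_rfl⟩]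
    norm_num
  have hmaps : ∀ δ ∈ Ioo (0 : ℝ) (1 / 4), MapsTo (δ / ·) (Icc (1 / 2) 2) (Ioo 0 1) :=
    fun δ hδ u hu => ⟨div_pos hδ.1 (hIcc hu), (div_lt_one (hIcc hu)).2 (by linarith [hδ.2, hu.1])⟩
  refine ⟨fun δ => -∫ u in (1 / 2 : ℝ)..2, deriv χ u * R (δ / u), fun δ hδ => ?_, ?_⟩
  · have hRcomp : ContinuousOn (fun u => R (δ / u)) (Icc (1 / 2) 2) :=
      hRcont.comp (continuousOn_const.div continuousOn_id fun u hu => (hIcc hu).ne') (hmaps δ hδ)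
    have hRint : IntervalIntegrable (fun u => deriv χ u * R (δ / u)) volume (1 / 2) 2 :=
      (hχ'.mul hRcomp).intervalIntegrable_of_Icc (by norm_num)
    rw [hG δ hδ, intervalIntegral_mul_expansion_comp_div hδ.1 (by norm_num) (by norm_num) hχ' hRint
      fun u hu => hF _ (hmaps δ hδ hu), hχ'_integral]
    simp only [neg_mul, Finset.sum_neg_distrib]
    ring
  · simpa using (tendsto_intervalIntegral_mul_of_tendstoUniformlyOn (by norm_num) hχ'
      ((tendstoUniformlyOn_comp_div_nhdsGT (by norm_num) hR).mono Icc_subset_Ici_self)).neg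

/-- Smooth versus sharp cutoff (Lemma 3.9): if
`F δ = Σ_{k<n} f_k δ^(k-n) + f_log log δ + P + R δ` with `R` continuous and `R → 0`
as `δ → 0⁺`, and `χ` is a `C¹` non-increasing cutoff (`≡ 1` on `(0,1/2]`, `≡ 0` on
`[2,∞)`), then `G δ = -∫_{1/2}^2 χ'(u) F(δ/u) du` has the expansion
`Σ_{k<n} l_k f_k δ^(k-n) + f_log log δ + (P + c_χ f_log) + R̃ δ` with `R̃ → 0`,
where `l_k = -∫_{1/2}^2 χ'(u) u^(n-k) du` and `c_χ = ∫_{1/2}^2 χ'(u) log u du`. -/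
theorem smooth_vs_sharp_cutoff (n : ℕ) (hn : 1 ≤ n) (f : ℕ → ℝ) (flog P : ℝ)
    (F R : ℝ → ℝ) (hRcont : ContinuousOn R (Ioo 0 1))
    (hR : Filter.Tendsto R (nhdsWithin 0 (Ioi 0)) (nhds 0))
    (hF : ∀ δ ∈ Ioo (0 : ℝ) 1,
      F δ = ∑ k ∈ Finset.range n, f k * δ ^ ((k : ℝ) - n) + flog * Real.log δ + P + R δ)
    (χ : ℝ → ℝ) (hχ : ContDiffOn ℝ 1 χ (Ioi 0)) (hmono : AntitoneOn χ (Ioi 0))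
    (hχ1 : ∀ u ∈ Ioc (0 : ℝ) (1 / 2), χ u = 1) (hχ0 : ∀ u ∈ Ici (2 : ℝ), χ u = 0)
    (G : ℝ → ℝ)
    (hG : ∀ δ ∈ Ioo (0 : ℝ) (1 / 4), G δ = -∫ u in (1 / 2 : ℝ)..2, deriv χ u * F (δ / u)) :
    ∃ Rt : ℝ → ℝ,
      (∀ δ ∈ Ioo (0 : ℝ) (1 / 4),
        G δ = ∑ k ∈ Finset.range n,
            (-∫ u in (1 / 2 : ℝ)..2, deriv χ u * u ^ (n - k)) * f k * δ ^ ((k : ℝ) - n)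
          + flog * Real.log δ
          + (P + (∫ u in (1 / 2 : ℝ)..2, deriv χ u * Real.log u) * flog)
          + Rt δ) ∧
      Filter.Tendsto Rt (nhdsWithin 0 (Ioi 0)) (nhds 0) :=
  smooth_vs_sharp_cutoff_general n f flog P F R hRcont hR hF χ hχ hχ1 hχ0 G hG
end
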